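/- Let ν be a partition with conjugate νᵀ, let k ≥ 1 be an integer, and for complex w with w^{2k} ≠ 1 define the rational expression F(w) = Σ_{i=1}^{ℓ(ν)} (w^{k(2ν_i − 2i + 1)} − w^{k(1 − 2i)}) + 1/(w^k − w^{−k}). Then: (a) for every complex w with |w| > 1, the series Σ_{i=1}^∞ w^{k(2ν_i − 2i + 1)} converges and its sum equals F(w); (b) for every complex w with 0 < |w| < 1, the series Σ_{j=1}^∞ w^{−k(2νᵀ_j − 2j + 1)} converges and its sum equals −F(w). -/

import Mathlib

/-- A partition: a non-increasing sequence of non-negative integers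
with only finitely many nonzero terms.  `part i` is the part `ν_{i+1}`
(0-based indexing). -/
structure NPartition where
  part : ℕ → ℕ
  antitone : ∀ ⦃i j : ℕ⦄, i ≤ j → part j ≤ part i
  eventually_zero : ∃ N : ℕ, ∀ i : ℕ, N ≤ i → part i = 0

/-- The conjugate partition: `conj f j = #{i ≥ 1 : f_i ≥ j+1}`
(0-based: this is `(fᵀ)_{j+1}`). -/
noncomputable def conj (f : ℕ → ℕ) (j : ℕ) : ℕ :=
  Nat.card {i : ℕ // j + 1 ≤ f i}

/-- The number of nonzero parts `ℓ(ν)`. -/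
noncomputable def plen (f : ℕ → ℕ) : ℕ :=
  Nat.card {i : ℕ // f i ≠ 0}

/-- The rational expression
`F(w) = Σ_{i=1}^{ℓ(ν)} (w^{k(2ν_i − 2i + 1)} − w^{k(1 − 2i)}) + 1/(w^k − w^{−k})`
(0-based indexing). -/
noncomputable def Fexpr (ν : NPartition) (k : ℕ) (w : ℂ) : ℂ :=
  (∑ i ∈ Finset.range (plen ν.part),
      (w ^ ((k : ℤ) * (2 * (ν.part i : ℤ) - 2 * (i : ℤ) - 1))
        - w ^ ((k : ℤ) * (-2 * (i : ℤ) - 1)))) +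
  1 / (w ^ (k : ℤ) - w ^ (-(k : ℤ)))

/-!
With `y = w ^ k` everything reduces to `k = 1`. For `‖y‖ > 1` the terms of the series agree with
the geometric series `∑ y ^ (-2i-1) = 1 / (y - y⁻¹)` beyond `ℓ(ν)`, which gives (a). Part (b) is
(a) for the conjugate partition at `y⁻¹`, combined with the identity `F_νᵀ(y⁻¹) = -F_ν(y)`. The
latter is Frobenius' complementarity: `{ν_i - i : i < ℓ(ν)}` and `{j + 1 - νᵀ_j : j < ν_0}`
partition the interval `[1 - ℓ(ν), ν_0]`, as do `{-i : i < ℓ(ν)}` and `{j + 1 : j < ν_0}`.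
-/

open Finset

theorem Finset.sum_comp_add_sum_comp_eq_sum {ι κ α M : Type*} [DecidableEq α] [AddCommMonoid M]
    {s : Finset ι} {t : Finset κ} {a : ι → α} {b : κ → α} {I : Finset α}
    (ha : Set.InjOn a s) (hb : Set.InjOn b t) (hab : ∀ i ∈ s, ∀ j ∈ t, a i ≠ b j)
    (haI : ∀ i ∈ s, a i ∈ I) (hbI : ∀ j ∈ t, b j ∈ I) (hcard : #I ≤ #s + #t) (g : α → M) :
    ∑ i ∈ s, g (a i) + ∑ j ∈ t, g (b j) = ∑ x ∈ I, g x := by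
  have hdisj : Disjoint (s.image a) (t.image b) := by
    simp only [disjoint_left, mem_image]
    rintro _ ⟨i, hi, rfl⟩ ⟨j, hj, hji⟩
    exact hab i hi j hj hji.symm
  have hunion : s.image a ∪ t.image b = I := by
    refine eq_of_subset_of_card_le ?_ ?_
    · simp only [union_subset_iff, image_subset_iff]
      exact ⟨haI, hbI⟩
    · rwa [card_union_of_disjoint hdisj, card_image_of_injOn ha, card_image_of_injOn hb]
  rw [← hunion, sum_union hdisj, sum_image ha, sum_image hb]

theorem sum_range_neg_add_sum_range_succ {M : Type*} [AddCommMonoid M] (L N : ℕ) (g : ℤ → M) :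
    ∑ i ∈ range L, g (-i) + ∑ j ∈ range N, g (j + 1) = ∑ n ∈ Icc (1 - L : ℤ) N, g n := by
  refine sum_comp_add_sum_comp_eq_sum ?_ ?_ ?_ ?_ ?_ ?_ g
  · intro i _ i' _ h
    simp only at h
    omega
  · intro j _ j' _ h
    simp only at h
    omega
  · intro i _ j _ h
    omega
  · intro i hi
    rw [mem_range] at hi
    rw [mem_Icc]
    omega
  · intro j hj
    rw [mem_range] at hj
    rw [mem_Icc]
    omega
  · simp only [Int.card_Icc, card_range]
    omega

theorem hasSum_zpow_neg_two_mul_sub_one {K : Type*} [NormedField K] [CompleteSpace K] {y : K}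
    (hy : 1 < ‖y‖) : HasSum (fun i : ℕ => y ^ (-2 * (i : ℤ) - 1)) (1 / (y - y⁻¹)) := by
  have hy0 : y ≠ 0 := norm_pos_iff.1 (one_pos.trans hy)
  have hq : ‖(y ^ 2)⁻¹‖ < 1 := by
    rw [norm_inv, norm_pow]
    exact inv_lt_one_of_one_lt₀ (one_lt_pow₀ hy two_ne_zero)
  have hy2 : y ^ 2 - 1 ≠ 0 := sub_ne_zero.2 fun h => by simp [h] at hq
  have hterm (i : ℕ) : y ^ (-2 * (i : ℤ) - 1) = y⁻¹ * ((y ^ 2)⁻¹) ^ i := by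
    rw [sub_eq_add_neg, zpow_add₀ hy0, zpow_mul, zpow_neg_one, mul_comm, zpow_natCast, zpow_neg,
      zpow_ofNat]
  have hsum : y⁻¹ * (1 - (y ^ 2)⁻¹)⁻¹ = 1 / (y - y⁻¹) := by
    field_simp
  rw [← hsum, funext hterm]
  exact (hasSum_geometric_of_norm_lt_one hq).mul_left y⁻¹

namespace NPartition

variable (ν : NPartition)

theorem lt_conj_iff (i j : ℕ) : i < conj ν.part j ↔ j < ν.part i := by
  have hex : ∃ n, ν.part n ≤ j := by
    obtain ⟨N, hN⟩ := ν.eventually_zero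
    exact ⟨N, (hN N le_rfl).trans_le j.zero_le⟩
  have hiff : ∀ i, j + 1 ≤ ν.part i ↔ i < Nat.find hex := fun i => by
    rw [Nat.lt_find_iff]
    exact ⟨fun h m hm => by have := ν.antitone hm; omega, fun h => by have := h i le_rfl; omega⟩
  have hconj : conj ν.part j = Nat.find hex := by
    rw [conj, Nat.card_congr ((Equiv.subtypeEquivRight hiff).trans Fin.equivSubtype.symm),
      Nat.card_eq_fintype_card, Fintype.card_fin]
  exact hconj ▸ (hiff i).symm

theorem plen_eq_conj_zero : plen ν.part = conj ν.part 0 :=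
  Nat.card_congr (Equiv.subtypeEquivRight fun _ => Nat.pos_iff_ne_zero.symm)

theorem lt_plen_iff (i : ℕ) : i < plen ν.part ↔ 0 < ν.part i := by
  rw [plen_eq_conj_zero, lt_conj_iff]

theorem conj_le_plen (j : ℕ) : conj ν.part j ≤ plen ν.part :=
  le_of_forall_lt fun i hi => (ν.lt_plen_iff i).2 (j.zero_le.trans_lt ((ν.lt_conj_iff i j).1 hi))

theorem le_part_zero (i : ℕ) : ν.part i ≤ ν.part 0 :=
  ν.antitone i.zero_le

theorem conj_antitone : Antitone (conj ν.part) := fun j j' hjj' =>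
  le_of_forall_lt fun i hi => (ν.lt_conj_iff i j).2 (hjj'.trans_lt ((ν.lt_conj_iff i j').1 hi))

noncomputable def transpose : NPartition where
  part := conj ν.part
  antitone := ν.conj_antitone
  eventually_zero := ⟨ν.part 0, fun j hj => Nat.eq_zero_of_not_pos fun h =>
    (((ν.lt_conj_iff 0 j).1 h).trans_le hj).false⟩

@[simp]
theorem transpose_part : ν.transpose.part = conj ν.part :=
  rfl

theorem plen_transpose : plen ν.transpose.part = ν.part 0 :=
  eq_of_forall_lt_iff fun i => (ν.transpose.lt_plen_iff i).trans (ν.lt_conj_iff 0 i)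

theorem sum_part_sub_add_sum_conj {M : Type*} [AddCommMonoid M] (g : ℤ → M) :
    ∑ i ∈ range (plen ν.part), g (ν.part i - i)
      + ∑ j ∈ range (ν.part 0), g (j + 1 - conj ν.part j)
      = ∑ n ∈ Icc (1 - plen ν.part : ℤ) (ν.part 0), g n := by
  refine sum_comp_add_sum_comp_eq_sum ?_ ?_ ?_ ?_ ?_ ?_ g
  · intro i _ i' _ h
    rcases le_total i i' with hii' | hii' <;> have := ν.antitone hii' <;> simp only at h <;> omega
  · intro j _ j' _ h
    rcases le_total j j' with hjj' | hjj' <;> have := ν.conj_antitone hjj' <;> simp only at h <;>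
      omega
  · -- `ν_i + νᵀ_j` is `≥ i + j + 2` if `j < ν_i` and `≤ i + j` otherwise, never `i + j + 1`.
    intro i _ j _ h
    have := ν.lt_conj_iff i j
    omega
  · intro i hi
    rw [mem_range] at hi
    have := (ν.lt_plen_iff i).1 hi
    have := ν.le_part_zero i
    rw [mem_Icc]
    omega
  · intro j hj
    rw [mem_range] at hj
    have := (ν.lt_conj_iff 0 j).2 hj
    have := ν.conj_le_plen j
    rw [mem_Icc]
    omega
  · simp only [Int.card_Icc, card_range]
    omega

theorem hasSum_Fexpr_one {y : ℂ} (hy : 1 < ‖y‖) :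
    HasSum (fun i : ℕ => y ^ (2 * (ν.part i : ℤ) - 2 * i - 1)) (Fexpr ν 1 y) := by
  have hfin : HasSum (fun i : ℕ => y ^ (2 * (ν.part i : ℤ) - 2 * i - 1) - y ^ (-2 * (i : ℤ) - 1))
      (∑ i ∈ range (plen ν.part),
        (y ^ (2 * (ν.part i : ℤ) - 2 * i - 1) - y ^ (-2 * (i : ℤ) - 1))) := by
    refine hasSum_sum_of_ne_finset_zero fun i hi => ?_
    have : ν.part i = 0 := by simpa [ν.lt_plen_iff] using hi
    simp only [this, CharP.cast_eq_zero, mul_zero, zero_sub, neg_mul, sub_self]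
  simpa [Fexpr] using hfin.add (hasSum_zpow_neg_two_mul_sub_one hy)

theorem Fexpr_transpose_one_inv (y : ℂ) :
    Fexpr ν.transpose 1 y⁻¹ = -Fexpr ν 1 y := by
  have h1 := ν.sum_part_sub_add_sum_conj fun n => y ^ (2 * n - 1)
  have h2 := sum_range_neg_add_sum_range_succ (plen ν.part) (ν.part 0) fun n => y ^ (2 * n - 1)
  have h3 : 1 / (y⁻¹ - y) = -(1 / (y - y⁻¹)) := by rw [← neg_sub, div_neg]
  have e1 (j : ℕ) : y⁻¹ ^ (2 * (conj ν.part j : ℤ) - 2 * j - 1)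
      = y ^ (2 * ((j : ℤ) + 1 - conj ν.part j) - 1) := by rw [inv_zpow']; ring_nf
  have e2 (j : ℕ) : y⁻¹ ^ (-2 * (j : ℤ) - 1) = y ^ (2 * ((j : ℤ) + 1) - 1) := by
    rw [inv_zpow']; ring_nf
  have e3 (i : ℕ) : y ^ (2 * (ν.part i : ℤ) - 2 * i - 1) = y ^ (2 * ((ν.part i : ℤ) - i) - 1) := by
    ring_nf
  have e4 (i : ℕ) : y ^ (-2 * (i : ℤ) - 1) = y ^ (2 * (-(i : ℤ)) - 1) := by ring_nf
  rw [Fexpr, Fexpr, ν.plen_transpose]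
  simp only [ν.transpose_part, Nat.cast_one, one_mul, zpow_one, zpow_neg_one, inv_inv, e1, e2, e3,
    e4, sum_sub_distrib, h3]
  linear_combination h1 - h2

theorem Fexpr_eq_Fexpr_one_pow (k : ℕ) (w : ℂ) :
    Fexpr ν k w = Fexpr ν 1 (w ^ k) := by
  simp only [Fexpr, zpow_mul, zpow_natCast, zpow_neg, Nat.cast_one, one_mul, zpow_one]

end NPartition

/-- (a) For `|w| > 1` the series `Σ_{i=1}^∞ w^{k(2ν_i − 2i + 1)}` converges to `F(w)`;
(b) for `0 < |w| < 1` the series `Σ_{j=1}^∞ w^{−k(2νᵀ_j − 2j + 1)}` converges to `−F(w)`. -/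
theorem power_sum_rational_continuation (ν : NPartition) (k : ℕ) (hk : 1 ≤ k) :
    (∀ w : ℂ, 1 < ‖w‖ →
        HasSum
          (fun i : ℕ => w ^ ((k : ℤ) * (2 * (ν.part i : ℤ) - 2 * (i : ℤ) - 1)))
          (Fexpr ν k w)) ∧
    (∀ w : ℂ, 0 < ‖w‖ → ‖w‖ < 1 →
        HasSum
          (fun j : ℕ => w ^ (-(k : ℤ) * (2 * (conj ν.part j : ℤ) - 2 * (j : ℤ) - 1)))
          (- Fexpr ν k w)) := by
  have hpow (w : ℂ) (m : ℤ) : w ^ ((k : ℤ) * m) = (w ^ k) ^ m := by rw [zpow_mul, zpow_natCast]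
  have hpow_neg (w : ℂ) (m : ℤ) : w ^ (-(k : ℤ) * m) = (w ^ k)⁻¹ ^ m := by
    rw [neg_mul, zpow_neg, hpow, inv_zpow]
  have hk0 : k ≠ 0 := Nat.one_le_iff_ne_zero.1 hk
  refine ⟨fun w hw => ?_, fun w hw0 hw1 => ?_⟩
  · simp only [hpow, ν.Fexpr_eq_Fexpr_one_pow k]
    exact ν.hasSum_Fexpr_one (norm_pow w k ▸ one_lt_pow₀ hw hk0)
  · have hy : 1 < ‖(w ^ k)⁻¹‖ := by
      rw [norm_inv, norm_pow]
      exact one_lt_inv₀ (pow_pos hw0 k) |>.2 (pow_lt_one₀ hw0.le hw1 hk0)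
    have h := ν.transpose.hasSum_Fexpr_one hy
    rw [ν.Fexpr_transpose_one_inv, ← ν.Fexpr_eq_Fexpr_one_pow] at h
    simpa only [hpow_neg, ν.transpose_part] using h
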